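/- The infinite measure θ with density 1/x with respect to Lebesgue measure on (0,1] is invariant under the Farey map σ₁: for every measurable set E ⊆ (0,1], θ(σ₁⁻¹(E)) = θ(E). -/

import Mathlib

open Real MeasureTheory ENNReal

/-- The Farey map σ₁(x) = 2/(1+|1-2x|) - 1. -/
noncomputable def fareyMap (x : ℝ) : ℝ := 2 / (1 + |1 - 2 * x|) - 1

/-- The infinite invariant measure of the Farey map: dθ(x) = dx/x on (0,1]. -/
noncomputable def fareyMeasure : Measure ℝ :=
  (volume.restrict (Set.Ioc (0:ℝ) 1)).withDensity (fun x => ENNReal.ofReal (1 / x))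

private theorem lintegral_image_abs_deriv_mul {s : Set ℝ} {f : ℝ → ℝ} {f' : ℝ → ℝ}
    (hs : MeasurableSet s) (hf' : ∀ x ∈ s, HasDerivWithinAt f (f' x) s x)
    (hf : Set.InjOn f s) (g : ℝ → ℝ≥0∞) :
    ∫⁻ x in f '' s, g x = ∫⁻ x in s, ENNReal.ofReal |f' x| * g (f x) := by
  simpa only [ContinuousLinearMap.det_toSpanSingleton] using
    lintegral_image_eq_lintegral_abs_det_fderiv_mul volume hs
      (fun x hx => (hf' x hx).hasFDerivWithinAt) hf g

private theorem fareyMap_left {x : ℝ} (hx1 : 0 < x) (hx2 : x ≤ 1/2) :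
    fareyMap x = x / (1 - x) := by
  have h : |1 - 2*x| = 1 - 2*x := abs_of_nonneg (by linarith)
  have h2 : (1:ℝ) - x > 0 := by linarith
  have h3 : (1:ℝ) + (1 - 2*x) ≠ 0 := by intro h'; linarith
  rw [fareyMap, h]
  field_simp
  ring

private theorem fareyMap_right {x : ℝ} (hx1 : 1/2 < x) (hx2 : x ≤ 1) :
    fareyMap x = (1 - x) / x := by
  have h : |1 - 2*x| = 2*x - 1 := by rw [abs_of_nonpos (by linarith)]; ring
  have h2 : (0:ℝ) < x := by linarith
  have h3 : (1:ℝ) + (2*x - 1) ≠ 0 := by intro h'; linarith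
  rw [fareyMap, h]
  field_simp
  ring

theorem fareyMeasure_invariant (E : Set ℝ) (hE : MeasurableSet E)
    (hE1 : E ⊆ Set.Ioc (0:ℝ) 1) :
    fareyMeasure (fareyMap ⁻¹' E) = fareyMeasure E := by
  set g1 : ℝ → ℝ := fun y => y / (1 + y) with hg1def
  set g2 : ℝ → ℝ := fun y => 1 / (1 + y) with hg2def
  have hmeasP : MeasurableSet (fareyMap ⁻¹' E) := by
    have hc : Continuous fareyMap := by
      unfold fareyMap
      apply Continuous.sub _ continuous_const
      apply Continuous.div continuous_const
      · exact continuous_const.add ((continuous_const.sub (continuous_const.mul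
          continuous_id)).abs)
      · intro x
        have := abs_nonneg (1 - 2*x)
        positivity
    exact hE.preimage hc.measurable
  have hA : fareyMap ⁻¹' E ∩ Set.Ioc 0 (1/2) = g1 '' E := by
    ext x
    constructor
    · rintro ⟨hxE, hx1, hx2⟩
      refine ⟨x / (1 - x), ?_, ?_⟩
      · rwa [← fareyMap_left hx1 hx2]
      · have h2 : (1:ℝ) - x > 0 := by linarith
        simp only [hg1def]
        field_simp
        ring
    · rintro ⟨y, hyE, rfl⟩
      obtain ⟨hy1, hy2⟩ := hE1 hyE
      have h1 : (0:ℝ) < 1 + y := by linarith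
      have hx1 : 0 < g1 y := by positivity
      have hx2 : g1 y ≤ 1/2 := by
        rw [hg1def]
        rw [div_le_div_iff₀ h1 (by norm_num)]
        linarith
      refine ⟨?_, hx1, hx2⟩
      show fareyMap (g1 y) ∈ E
      rw [fareyMap_left hx1 hx2]
      have key : (g1 y) / (1 - g1 y) = y := by
        simp only [hg1def]
        rw [div_eq_iff]
        · field_simp
          ring
        · intro h'
          have he : 1 - y / (1+y) = 1/(1+y) := by field_simp; ring
          rw [he] at h'
          exact absurd h' (by positivity)
      rwa [key]
  have hB : fareyMap ⁻¹' E ∩ Set.Ioc (1/2) 1 = g2 '' (E ∩ Set.Ioo 0 1) := by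
    ext x
    constructor
    · rintro ⟨hxE, hx1, hx2⟩
      have hx0 : (0:ℝ) < x := by linarith
      have hfE := hxE
      rw [Set.mem_preimage, fareyMap_right hx1 hx2] at hfE
      have hy1 : 0 < (1-x)/x := (hE1 hfE).1
      have hy2 : (1-x)/x < 1 := by
        rw [div_lt_one hx0]; linarith
      refine ⟨(1-x)/x, ⟨hfE, hy1, hy2⟩, ?_⟩
      simp only [hg2def]
      rw [div_eq_iff]
      · field_simp
        ring
      · intro h'
        have he : 1 + (1-x)/x = 1/x := by field_simp; ring
        rw [he] at h'
        exact absurd h' (by positivity)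
    · rintro ⟨y, ⟨hyE, hy1, hy2⟩, rfl⟩
      have h1 : (0:ℝ) < 1 + y := by linarith
      have hx1 : 1/2 < g2 y := by
        rw [hg2def]
        rw [div_lt_div_iff₀ (by norm_num) h1]
        linarith
      have hx2 : g2 y ≤ 1 := by
        rw [hg2def]
        rw [div_le_one h1]
        linarith
      refine ⟨?_, hx1, hx2⟩
      show fareyMap (g2 y) ∈ E
      rw [fareyMap_right hx1 hx2]
      have key : (1 - g2 y) / g2 y = y := by
        simp only [hg2def]
        rw [div_eq_iff]
        · field_simp
          ring
        · positivity
      rwa [key]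
  have hsplit : fareyMap ⁻¹' E ∩ Set.Ioc 0 1
      = (fareyMap ⁻¹' E ∩ Set.Ioc 0 (1/2)) ∪ (fareyMap ⁻¹' E ∩ Set.Ioc (1/2) 1) := by
    rw [← Set.inter_union_distrib_left, Set.Ioc_union_Ioc_eq_Ioc (by norm_num) (by norm_num)]
  have hmeas_apply : ∀ S : Set ℝ, MeasurableSet S →
      fareyMeasure S = ∫⁻ x in S ∩ Set.Ioc 0 1, ENNReal.ofReal (1/x) := by
    intro S hS
    rw [fareyMeasure, withDensity_apply _ hS, Measure.restrict_restrict hS]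
  rw [hmeas_apply _ hmeasP, hmeas_apply _ hE, hsplit]
  have hdisj : Disjoint (fareyMap ⁻¹' E ∩ Set.Ioc 0 (1/2))
      (fareyMap ⁻¹' E ∩ Set.Ioc (1/2) 1) := by
    rw [Set.disjoint_left]
    rintro x ⟨-, -, h⟩ ⟨-, h', -⟩
    linarith
  have hmB : MeasurableSet (fareyMap ⁻¹' E ∩ Set.Ioc (1/2) 1) :=
    hmeasP.inter measurableSet_Ioc
  rw [lintegral_union hmB hdisj, hA, hB]
  have hg1' : ∀ y ∈ E, HasDerivWithinAt g1 (1/(1+y)^2) E y := by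
    intro y hy
    obtain ⟨hy1, hy2⟩ := hE1 hy
    have h1 : (1:ℝ) + y ≠ 0 := by positivity
    have hd : HasDerivAt (fun x : ℝ => x/(1+x)) ((1*(1+y) - y*1)/(1+y)^2) y :=
      (hasDerivAt_id y).div ((hasDerivAt_id y).const_add 1) h1
    have h2 : (1*(1+y) - y*1)/(1+y)^2 = 1/(1+y)^2 := by ring
    rw [h2] at hd
    exact hd.hasDerivWithinAt
  have hg1inj : Set.InjOn g1 E := by
    intro a ha b hb hab
    have ha1 : (0:ℝ) < 1 + a := by have := (hE1 ha).1; linarith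
    have hb1 : (0:ℝ) < 1 + b := by have := (hE1 hb).1; linarith
    simp only [hg1def] at hab
    rw [div_eq_div_iff ha1.ne' hb1.ne'] at hab
    nlinarith [hab]
  have hEI : MeasurableSet (E ∩ Set.Ioo (0:ℝ) 1) := hE.inter measurableSet_Ioo
  have hg2' : ∀ y ∈ E ∩ Set.Ioo (0:ℝ) 1,
      HasDerivWithinAt g2 (-(1/(1+y)^2)) (E ∩ Set.Ioo 0 1) y := by
    rintro y ⟨hyE, hy1, hy2⟩
    have h1 : (1:ℝ) + y ≠ 0 := by positivity
    have hd : HasDerivAt (fun x : ℝ => 1/(1+x)) ((0*(1+y) - 1*1)/(1+y)^2) y :=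
      (hasDerivAt_const y 1).div ((hasDerivAt_id y).const_add 1) h1
    have h2 : (0*(1+y) - 1*1)/(1+y)^2 = -(1/(1+y)^2) := by ring
    rw [h2] at hd
    exact hd.hasDerivWithinAt
  have hg2inj : Set.InjOn g2 (E ∩ Set.Ioo (0:ℝ) 1) := by
    rintro a ⟨-, ha1, -⟩ b ⟨-, hb1, -⟩ hab
    have ha' : (0:ℝ) < 1 + a := by linarith
    have hb' : (0:ℝ) < 1 + b := by linarith
    simp only [hg2def] at hab
    rw [div_eq_div_iff ha'.ne' hb'.ne'] at hab
    linarith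
  rw [lintegral_image_abs_deriv_mul hE hg1' hg1inj,
      lintegral_image_abs_deriv_mul hEI hg2' hg2inj]
  -- simplify integrands
  have int1 : ∫⁻ y in E, ENNReal.ofReal |1/(1+y)^2| * ENNReal.ofReal (1 / g1 y)
      = ∫⁻ y in E, ENNReal.ofReal (1/(y*(1+y))) := by
    apply setLIntegral_congr_fun hE
    intro y hy
    beta_reduce
    obtain ⟨hy1, hy2⟩ := hE1 hy
    have h1 : (0:ℝ) < 1 + y := by linarith
    have h2 : |1/(1+y)^2| = 1/(1+y)^2 := abs_of_pos (by positivity)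
    have h3 : (1:ℝ) / g1 y = (1+y)/y := by
      simp only [hg1def]
      rw [one_div, inv_div]
    rw [h2, h3, ← ENNReal.ofReal_mul (by positivity)]
    congr 1
    field_simp
  have int2 : ∫⁻ y in E ∩ Set.Ioo (0:ℝ) 1,
      ENNReal.ofReal |(-(1/(1+y)^2))| * ENNReal.ofReal (1 / g2 y)
      = ∫⁻ y in E, ENNReal.ofReal (1/(1+y)) := by
    have hae : (E ∩ Set.Ioo (0:ℝ) 1 : Set ℝ) =ᵐ[volume] E := by
      rw [Filter.eventuallyEq_set]
      have h1 : volume ({(1:ℝ)} : Set ℝ) = 0 := volume_singleton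
      filter_upwards [measure_eq_zero_iff_ae_notMem.mp h1] with x hx
      constructor
      · exact fun h => h.1
      · intro hxE
        obtain ⟨hx1, hx2⟩ := hE1 hxE
        refine ⟨hxE, hx1, lt_of_le_of_ne hx2 ?_⟩
        intro h; exact hx (by simpa using h)
    rw [setLIntegral_congr hae]
    apply setLIntegral_congr_fun hE
    intro y hy
    beta_reduce
    obtain ⟨hy1, hy2⟩ := hE1 hy
    have h1 : (0:ℝ) < 1 + y := by linarith
    have h2 : |(-(1/(1+y)^2))| = 1/(1+y)^2 := by
      rw [abs_neg]; exact abs_of_pos (by positivity)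
    have h3 : (1:ℝ) / g2 y = 1+y := by
      simp only [hg2def]
      rw [one_div_one_div]
    rw [h2, h3, ← ENNReal.ofReal_mul (by positivity)]
    congr 1
    field_simp
  rw [int1, int2, Set.inter_eq_self_of_subset_left hE1]
  have hm : Measurable fun y : ℝ => ENNReal.ofReal (1/(y*(1+y))) := by
    apply Measurable.ennreal_ofReal
    simp only [one_div]
    exact (measurable_id.mul (measurable_const.add measurable_id)).inv
  rw [← lintegral_add_left hm]
  apply setLIntegral_congr_fun hE
  intro y hy
  beta_reduce
  obtain ⟨hy1, hy2⟩ := hE1 hy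
  have h1 : (0:ℝ) < 1 + y := by linarith
  rw [← ENNReal.ofReal_add (by positivity) (by positivity)]
  congr 1
  field_simp
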